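/- Let n ≥ 1, let U ⊆ ℂⁿ be a nonempty open connected set, and let f : ℂⁿ → ℂ be ℝ-analytic on U (AnalyticOnNhd ℝ f U). If there exists a nonempty open set V ⊆ U such that f is holomorphic (complex differentiable) at every point of V, then f is holomorphic at every point of U. -/

import Mathlib

/-!
The map `L ↦ L ∘ I - I • L` on real-linear maps vanishes exactly on the complex-linear ones, so
`f` is holomorphic at `z` iff it is real-differentiable there and this defect of `fderiv ℝ f z`
vanishes. For real-analytic `f` the defect is again real-analytic, and it vanishes near a point of
`V`, hence on all of `U` by the identity theorem.
-/

open Complex Topology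

theorem Complex.re_smul_add_im_smul_I_smul {G : Type*} [AddCommGroup G] [Module ℂ G]
    (c : ℂ) (w : G) : c.re • w + c.im • I • w = c • w := by
  rw [← coe_smul, ← coe_smul, smul_smul, ← add_smul, re_add_im]

namespace ContinuousLinearMap

variable {E F : Type*} [NormedAddCommGroup E] [NormedSpace ℂ E]
  [NormedAddCommGroup F] [NormedSpace ℂ F]

/-- `-2i` times the complex-antilinear part of `L`; for `L = fderiv ℝ f z` this is `-2i ∂̄f(z)`. -/
noncomputable def cauchyRiemannDefect : (E →L[ℝ] F) →L[ℝ] E →L[ℝ] F :=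
  (compL ℝ E E F).flip ((I • ContinuousLinearMap.id ℂ E).restrictScalars ℝ) -
    compL ℝ E F F ((I • ContinuousLinearMap.id ℂ F).restrictScalars ℝ)

@[simp]
theorem cauchyRiemannDefect_apply_apply (L : E →L[ℝ] F) (v : E) :
    cauchyRiemannDefect L v = L (I • v) - I • L v :=
  rfl

theorem exists_restrictScalars_eq_of_map_I_smul (L : E →L[ℝ] F)
    (hL : ∀ v, L (I • v) = I • L v) : ∃ L' : E →L[ℂ] F, L'.restrictScalars ℝ = L := by
  have map_smul (c : ℂ) (v : E) : L (c • v) = c • L v := by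
    rw [← re_smul_add_im_smul_I_smul c v, ← re_smul_add_im_smul_I_smul c (L v), map_add,
      map_smul, map_smul, hL]
  exact ⟨⟨⟨L.toLinearMap.toAddHom, map_smul⟩, L.cont⟩, rfl⟩

theorem cauchyRiemannDefect_eq_zero_iff {L : E →L[ℝ] F} :
    cauchyRiemannDefect L = 0 ↔ ∃ L' : E →L[ℂ] F, L'.restrictScalars ℝ = L := by
  constructor
  · intro h
    refine exists_restrictScalars_eq_of_map_I_smul L fun v ↦ ?_
    simpa [sub_eq_zero] using congr($h v)
  · rintro ⟨L', rfl⟩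
    ext v
    simp

end ContinuousLinearMap

open ContinuousLinearMap

variable {E F : Type*} [NormedAddCommGroup E] [NormedSpace ℂ E]
  [NormedAddCommGroup F] [NormedSpace ℂ F]

theorem differentiableAt_complex_iff_cauchyRiemannDefect_fderiv_eq_zero {f : E → F} {z : E} :
    DifferentiableAt ℂ f z ↔
      DifferentiableAt ℝ f z ∧ cauchyRiemannDefect (fderiv ℝ f z) = 0 := by
  rw [cauchyRiemannDefect_eq_zero_iff]
  constructor
  · intro hf
    exact ⟨hf.restrictScalars ℝ, ⟨fderiv ℂ f z, (hf.fderiv_restrictScalars ℝ).symm⟩⟩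
  · rintro ⟨hf, hL⟩
    exact (differentiableAt_iff_restrictScalars ℝ hf).mpr hL

theorem AnalyticOnNhd.differentiableAt_complex_of_eventually [CompleteSpace F] {f : E → F}
    {U : Set E} (hf : AnalyticOnNhd ℝ f U) (hU : IsPreconnected U) {z₀ : E} (h₀ : z₀ ∈ U)
    (hz₀ : ∀ᶠ z in 𝓝 z₀, DifferentiableAt ℂ f z) {z : E} (hz : z ∈ U) :
    DifferentiableAt ℂ f z := by
  have defect_analytic : AnalyticOnNhd ℝ (fun x ↦ cauchyRiemannDefect (fderiv ℝ f x)) U :=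
    (cauchyRiemannDefect (E := E) (F := F)).comp_analyticOnNhd hf.fderiv
  have defect_eq_zero := defect_analytic.eqOn_zero_of_preconnected_of_eventuallyEq_zero hU h₀
    (hz₀.mono fun _ hx ↦ (differentiableAt_complex_iff_cauchyRiemannDefect_fderiv_eq_zero.mp hx).2)
  exact differentiableAt_complex_iff_cauchyRiemannDefect_fderiv_eq_zero.mpr
    ⟨(hf z hz).differentiableAt, defect_eq_zero hz⟩

theorem holomorphy_propagates_general
    (n : ℕ)
    (U : Set (EuclideanSpace ℂ (Fin n)))
    (hUconn : IsConnected U)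
    (f : EuclideanSpace ℂ (Fin n) → ℂ)
    (hf : AnalyticOnNhd ℝ f U)
    (hV : ∃ V : Set (EuclideanSpace ℂ (Fin n)), V.Nonempty ∧ IsOpen V ∧ V ⊆ U ∧
      ∀ p ∈ V, DifferentiableAt ℂ f p) :
    ∀ p ∈ U, DifferentiableAt ℂ f p := by
  obtain ⟨V, ⟨z₀, hz₀⟩, hVopen, hVU, hVdiff⟩ := hV
  intro p hp
  exact hf.differentiableAt_complex_of_eventually hUconn.isPreconnected (hVU hz₀)
    ((hVopen.eventually_mem hz₀).mono hVdiff) hp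

/-- **Propagation of holomorphy for real-analytic functions.**
If `f` is `ℝ`-analytic on a nonempty open connected set `U ⊆ ℂⁿ` and holomorphic on
some nonempty open subset `V ⊆ U`, then `f` is holomorphic on all of `U`. -/
theorem holomorphy_propagates
    (n : ℕ) (hn : 1 ≤ n)
    (U : Set (EuclideanSpace ℂ (Fin n))) (hUne : U.Nonempty)
    (hUopen : IsOpen U) (hUconn : IsConnected U)
    (f : EuclideanSpace ℂ (Fin n) → ℂ)
    (hf : AnalyticOnNhd ℝ f U)
    (hV : ∃ V : Set (EuclideanSpace ℂ (Fin n)), V.Nonempty ∧ IsOpen V ∧ V ⊆ U ∧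
      ∀ p ∈ V, DifferentiableAt ℂ f p) :
    ∀ p ∈ U, DifferentiableAt ℂ f p :=
  holomorphy_propagates_general n U hUconn f hf hV
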